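/- arXiv:2007.06803 — 6 statements merged into one kernel-verified Lean document; each statement's English description precedes it below -/
import Mathlib

section
/- Let m ≥ 1, r > 0, and let X, X' ∈ ℝ^m with ‖X' − X‖₂ ≤ r. Let x, x' ∈ ℝ^m, M ∈ ℝ^{m×m}, c ∈ ℝ^m, and fix an index j ∈ {1,…,m}. Set a = ∑_{i=1}^m M_{i,j} x_i + c_j and a' = ∑_{i=1}^m M_{i,j} x'_i + c_j. Suppose there are flags P : {1,…,m} → {0,1}, a matrix L ∈ ℝ^{m×m} with rows L_i, a vector d ∈ ℝ^m, and nonnegative bounds U ∈ ℝ^m such that: (i) for every i with P_i = 0, x_i = ∑_{l=1}^m L_{i,l} X_l + d_i and x'_i = ∑_{l=1}^m L_{i,l} X'_l + d_i; (ii) for every i, |x'_i − x_i| ≤ U_i. Then |a' − a| ≤ ∑_{i : P_i = 1} |M_{i,j}| · U_i + r · ‖∑_{i : P_i = 0} M_{i,j} · L_i‖₂, where ‖·‖₂ is the Euclidean norm on ℝ^m. -/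
/-!
Split `a' - a = ∑ i, M i j * (x' i - x i)` according to the flags. Each flagged neuron contributes
at most `|M i j| * U i`. On the unflagged ones `x' - x` is linear in `X' - X`, so their total
contribution is `⟪∑ i, M i j • L i, X' - X⟫`, which Cauchy–Schwarz bounds by
`r * ‖∑ i, M i j • L i‖`.
-/

open Finset

variable {ι κ : Type*}

lemma sum_filter_eq_one_add_sum_filter_eq_zero {β : Type*} [AddCommMonoid β] (s : Finset ι)
    {P : ι → ℕ} (hP : ∀ i, P i = 0 ∨ P i = 1) (f : ι → β) :
    ∑ i ∈ s, f i =
      ∑ i ∈ s.filter (fun i => P i = 1), f i + ∑ i ∈ s.filter (fun i => P i = 0), f i := by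
  rw [← sum_filter_add_sum_filter_not s (fun i => P i = 1)]
  congr 2
  exact filter_congr fun i _ => by rcases hP i with h | h <;> simp [h]

lemma abs_sum_mul_sub_le (s : Finset ι) (w y y' U : ι → ℝ)
    (h : ∀ i ∈ s, |y' i - y i| ≤ U i) :
    |∑ i ∈ s, w i * (y' i - y i)| ≤ ∑ i ∈ s, |w i| * U i := by
  refine (abs_sum_le_sum_abs _ _).trans (sum_le_sum fun i hi => ?_)
  rw [abs_mul]
  exact mul_le_mul_of_nonneg_left (h i hi) (abs_nonneg _)

variable [Fintype κ]

lemma inner_sum_smul_eq (s : Finset ι) (w : ι → ℝ) (L : ι → EuclideanSpace ℝ κ)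
    (Y : EuclideanSpace ℝ κ) :
    inner ℝ (∑ i ∈ s, w i • L i) Y = ∑ i ∈ s, w i * ∑ l, L i l * Y l := by
  simp [sum_inner, inner_smul_left, PiLp.inner_apply, mul_comm]

lemma abs_sum_mul_affine_sub_le (s : Finset ι) (w d : ι → ℝ)
    (L : ι → EuclideanSpace ℝ κ) {X X' : EuclideanSpace ℝ κ} {r : ℝ} (hXX' : ‖X' - X‖ ≤ r) :
    |∑ i ∈ s, w i * ((∑ l, L i l * X' l + d i) - (∑ l, L i l * X l + d i))| ≤
      r * ‖∑ i ∈ s, w i • L i‖ := by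
  have hlin : ∀ i, (∑ l, L i l * X' l + d i) - (∑ l, L i l * X l + d i) =
      ∑ l, L i l * (X' - X) l := by
    intro i
    simp only [PiLp.sub_apply, mul_sub, sum_sub_distrib]
    ring
  simp only [hlin, ← inner_sum_smul_eq]
  calc _ ≤ ‖∑ i ∈ s, w i • L i‖ * ‖X' - X‖ := abs_real_inner_le_norm _ _
    _ ≤ r * ‖∑ i ∈ s, w i • L i‖ := by
      rw [mul_comm]; exact mul_le_mul_of_nonneg_right hXX' (norm_nonneg _)

theorem preactivation_perturbation_bound_general
    (m : ℕ) (r : ℝ)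
    (X X' : EuclideanSpace ℝ (Fin m)) (hXX' : ‖X' - X‖ ≤ r)
    (x x' : Fin m → ℝ) (M : Matrix (Fin m) (Fin m) ℝ) (c : Fin m → ℝ) (j : Fin m)
    (P : Fin m → ℕ) (hP : ∀ i, P i = 0 ∨ P i = 1)
    (L : Fin m → EuclideanSpace ℝ (Fin m)) (d : Fin m → ℝ)
    (U : Fin m → ℝ)
    (a a' : ℝ)
    (ha : a = (∑ i, M i j * x i) + c j)
    (ha' : a' = (∑ i, M i j * x' i) + c j)
    (haff : ∀ i, P i = 0 →
      x i = (∑ l, L i l * X l) + d i ∧ x' i = (∑ l, L i l * X' l) + d i)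
    (hUb : ∀ i, |x' i - x i| ≤ U i) :
    |a' - a| ≤
      (∑ i ∈ Finset.univ.filter (fun i => P i = 1), |M i j| * U i) +
        r * ‖∑ i ∈ Finset.univ.filter (fun i => P i = 0), M i j • L i‖ := by
  have hsplit : a' - a = ∑ i ∈ univ.filter (fun i => P i = 1), M i j * (x' i - x i) +
      ∑ i ∈ univ.filter (fun i => P i = 0), M i j * (x' i - x i) := by
    rw [ha, ha', add_sub_add_right_eq_sub, ← sum_sub_distrib,
      ← sum_filter_eq_one_add_sum_filter_eq_zero univ hP]
    simp only [mul_sub]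
  have haff_sum : ∑ i ∈ univ.filter (fun i => P i = 0), M i j * (x' i - x i) =
      ∑ i ∈ univ.filter (fun i => P i = 0),
        M i j * ((∑ l, L i l * X' l + d i) - (∑ l, L i l * X l + d i)) :=
    sum_congr rfl fun i hi => by
      obtain ⟨hx, hx'⟩ := haff i (mem_filter.1 hi).2
      rw [hx, hx']
  rw [hsplit, haff_sum]
  exact (abs_add_le _ _).trans (add_le_add
    (abs_sum_mul_sub_le _ _ _ _ _ fun i _ => hUb i) (abs_sum_mul_affine_sub_le _ _ _ _ hXX'))

/-- Lemma 4.2 of the paper: the key perturbation inequality for the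
pre-activation of neuron `j` at the next layer of a ReLU network. -/
theorem preactivation_perturbation_bound
    (m : ℕ) (hm : 1 ≤ m) (r : ℝ) (hr : 0 < r)
    (X X' : EuclideanSpace ℝ (Fin m)) (hXX' : ‖X' - X‖ ≤ r)
    (x x' : Fin m → ℝ) (M : Matrix (Fin m) (Fin m) ℝ) (c : Fin m → ℝ) (j : Fin m)
    (P : Fin m → ℕ) (hP : ∀ i, P i = 0 ∨ P i = 1)
    (L : Fin m → EuclideanSpace ℝ (Fin m)) (d : Fin m → ℝ)
    (U : Fin m → ℝ) (hU : ∀ i, 0 ≤ U i)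
    (a a' : ℝ)
    (ha : a = (∑ i, M i j * x i) + c j)
    (ha' : a' = (∑ i, M i j * x' i) + c j)
    (haff : ∀ i, P i = 0 →
      x i = (∑ l, L i l * X l) + d i ∧ x' i = (∑ l, L i l * X' l) + d i)
    (hUb : ∀ i, |x' i - x i| ≤ U i) :
    |a' - a| ≤
      (∑ i ∈ Finset.univ.filter (fun i => P i = 1), |M i j| * U i) +
        r * ‖∑ i ∈ Finset.univ.filter (fun i => P i = 0), M i j • L i‖ :=
  preactivation_perturbation_bound_general m r X X' hXX' x x' M c j P hP L d U a a' ha ha' haff hUb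
end

section
/- Let m ≥ 1, r > 0, and let X, X' ∈ ℝ^m with ‖X' − X‖₂ ≤ r. Let x, x' ∈ ℝ^m, M ∈ ℝ^{m×m}, c ∈ ℝ^m, and fix an index j ∈ {1,…,m}. Set a = ∑_{i=1}^m M_{i,j} x_i + c_j and a' = ∑_{i=1}^m M_{i,j} x'_i + c_j. Suppose there are flags P : {1,…,m} → {0,1}, a matrix L ∈ ℝ^{m×m} with rows L_i, a vector d ∈ ℝ^m, and nonnegative bounds U ∈ ℝ^m such that: (i) for every i with P_i = 0, x_i = ∑_{l=1}^m L_{i,l} X_l + d_i and x'_i = ∑_{l=1}^m L_{i,l} X'_l + d_i; (ii) for every i, |x'_i − x_i| ≤ U_i. If a < 0 and a + ∑_{i : P_i = 1} |M_{i,j}| · U_i + r · ‖∑_{i : P_i = 0} M_{i,j} · L_i‖₂ < 0, then a' < 0 and max(a', 0) = 0. -/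
/-!
Write `a' - a = ∑ᵢ M i j * (x' i - x i)` and split the sum according to the flags. On the affine
indices (`P i = 0`) the increments are `⟪L i, X' - X⟫`, so their weighted sum is
`⟪∑ᵢ M i j • L i, X' - X⟫ ≤ r * ‖∑ᵢ M i j • L i‖` by Cauchy–Schwarz; each remaining increment is
at most `|M i j| * U i`. Hence `a' ≤ a + margin < 0`.
-/

open Finset RealInnerProductSpace

theorem EuclideanSpace.sum_mul_eq_inner {ι : Type*} [Fintype ι] (v X : EuclideanSpace ℝ ι) :
    ∑ l, v l * X l = ⟪v, X⟫ := by
  simp [EuclideanSpace.inner_eq_star_dotProduct, dotProduct, mul_comm]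

theorem sum_mul_inner_sub_le_norm_mul_norm {ι E : Type*} [NormedAddCommGroup E]
    [InnerProductSpace ℝ E] (s : Finset ι) (w : ι → ℝ) (L : ι → E) (X X' : E) :
    ∑ i ∈ s, w i * (⟪L i, X'⟫ - ⟪L i, X⟫) ≤ ‖∑ i ∈ s, w i • L i‖ * ‖X' - X‖ :=
  calc ∑ i ∈ s, w i * (⟪L i, X'⟫ - ⟪L i, X⟫) = ⟪∑ i ∈ s, w i • L i, X' - X⟫ := by
        simp only [sum_inner, real_inner_smul_left, inner_sub_right, mul_sub, sum_sub_distrib]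
    _ ≤ _ := real_inner_le_norm _ _

theorem sum_mul_le_sum_abs_mul {ι : Type*} (s : Finset ι) (w δ U : ι → ℝ)
    (h : ∀ i ∈ s, |δ i| ≤ U i) : ∑ i ∈ s, w i * δ i ≤ ∑ i ∈ s, |w i| * U i :=
  sum_le_sum fun i hi => calc
    w i * δ i ≤ |w i * δ i| := le_abs_self _
    _ = |w i| * |δ i| := abs_mul _ _
    _ ≤ |w i| * U i := mul_le_mul_of_nonneg_left (h i hi) (abs_nonneg _)

theorem inactive_neuron_stays_inactive_general
    (m : ℕ) (r : ℝ)
    (X X' : EuclideanSpace ℝ (Fin m)) (hXX' : ‖X' - X‖ ≤ r)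
    (x x' : Fin m → ℝ) (M : Matrix (Fin m) (Fin m) ℝ) (c : Fin m → ℝ) (j : Fin m)
    (P : Fin m → ℕ) (hP : ∀ i, P i = 0 ∨ P i = 1)
    (L : Fin m → EuclideanSpace ℝ (Fin m)) (d : Fin m → ℝ)
    (U : Fin m → ℝ)
    (a a' : ℝ)
    (ha : a = (∑ i, M i j * x i) + c j)
    (ha' : a' = (∑ i, M i j * x' i) + c j)
    (haff : ∀ i, P i = 0 →
      x i = (∑ l, L i l * X l) + d i ∧ x' i = (∑ l, L i l * X' l) + d i)
    (hUb : ∀ i, |x' i - x i| ≤ U i)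
    (hmargin : a + ((∑ i ∈ Finset.univ.filter (fun i => P i = 1), |M i j| * U i) +
      r * ‖∑ i ∈ Finset.univ.filter (fun i => P i = 0), M i j • L i‖) < 0) :
    a' < 0 ∧ max a' 0 = 0 := by
  set S₀ := univ.filter (fun i => P i = 0)
  set S₁ := univ.filter (fun i => P i = 1)
  have h_increment : a' = a + ∑ i, M i j * (x' i - x i) := by
    simp only [ha, ha', mul_sub, sum_sub_distrib]; ring
  have h_split : ∑ i, M i j * (x' i - x i) =
      ∑ i ∈ S₀, M i j * (x' i - x i) + ∑ i ∈ S₁, M i j * (x' i - x i) := by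
    rw [← sum_filter_add_sum_filter_not univ (fun i => P i = 0)]
    congr 2
    exact filter_congr fun i _ => by rcases hP i with h | h <;> simp [h]
  have h_affine : ∑ i ∈ S₀, M i j * (x' i - x i) =
      ∑ i ∈ S₀, M i j * (⟪L i, X'⟫ - ⟪L i, X⟫) := by
    refine sum_congr rfl fun i hi => ?_
    obtain ⟨hx, hx'⟩ := haff i (mem_filter.mp hi).2
    simp only [hx, hx', EuclideanSpace.sum_mul_eq_inner, add_sub_add_right_eq_sub]
  have h_S₀ := sum_mul_inner_sub_le_norm_mul_norm S₀ (fun i => M i j) L X X'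
  have h_S₁ := sum_mul_le_sum_abs_mul S₁ (fun i => M i j) (fun i => x' i - x i) U
    fun i _ => hUb i
  have h_radius := mul_le_mul_of_nonneg_left hXX' (norm_nonneg (∑ i ∈ S₀, M i j • L i))
  have ha'_neg : a' < 0 := by linarith
  exact ⟨ha'_neg, max_eq_right ha'_neg.le⟩

/-- The negative-pre-activation case in the proof of Proposition 4.1: a neuron
that is strictly inactive by more than the perturbation margin stays inactive
for every perturbed input in the radius-`r` ball. -/
theorem inactive_neuron_stays_inactive
    (m : ℕ) (hm : 1 ≤ m) (r : ℝ) (hr : 0 < r)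
    (X X' : EuclideanSpace ℝ (Fin m)) (hXX' : ‖X' - X‖ ≤ r)
    (x x' : Fin m → ℝ) (M : Matrix (Fin m) (Fin m) ℝ) (c : Fin m → ℝ) (j : Fin m)
    (P : Fin m → ℕ) (hP : ∀ i, P i = 0 ∨ P i = 1)
    (L : Fin m → EuclideanSpace ℝ (Fin m)) (d : Fin m → ℝ)
    (U : Fin m → ℝ) (hU : ∀ i, 0 ≤ U i)
    (a a' : ℝ)
    (ha : a = (∑ i, M i j * x i) + c j)
    (ha' : a' = (∑ i, M i j * x' i) + c j)
    (haff : ∀ i, P i = 0 →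
      x i = (∑ l, L i l * X l) + d i ∧ x' i = (∑ l, L i l * X' l) + d i)
    (hUb : ∀ i, |x' i - x i| ≤ U i)
    (haneg : a < 0)
    (hmargin : a + ((∑ i ∈ Finset.univ.filter (fun i => P i = 1), |M i j| * U i) +
      r * ‖∑ i ∈ Finset.univ.filter (fun i => P i = 0), M i j • L i‖) < 0) :
    a' < 0 ∧ max a' 0 = 0 :=
  inactive_neuron_stays_inactive_general m r X X' hXX' x x' M c j P hP L d U a a' ha ha' haff hUb
    hmargin
end

section
/- Let m ≥ 1, r > 0, and let X, X' ∈ ℝ^m with ‖X' − X‖₂ ≤ r. Let x, x' ∈ ℝ^m, M ∈ ℝ^{m×m}, c ∈ ℝ^m, and fix an index j ∈ {1,…,m}. Set a = ∑_{i=1}^m M_{i,j} x_i + c_j and a' = ∑_{i=1}^m M_{i,j} x'_i + c_j. Suppose there are flags P : {1,…,m} → {0,1}, a matrix L ∈ ℝ^{m×m} with rows L_i, and a vector d ∈ ℝ^m such that for every i with P_i = 0, x_i = ∑_{l=1}^m L_{i,l} X_l + d_i and x'_i = ∑_{l=1}^m L_{i,l} X'_l + d_i. Assume additionally that P_i = 0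 for every i with M_{i,j} ≠ 0, and that a > r · ‖∑_{i : P_i = 0} M_{i,j} · L_i‖₂. Then a' > 0 and max(a', 0) = a' = ∑_{l=1}^m (∑_{i : P_i = 0} M_{i,j} L_{i,l}) · X'_l + (∑_{i : P_i = 0} M_{i,j} d_i + c_j); in particular the post-activation of neuron j at the next layer is again an affine function of the perturbed input X' with coefficient row ∑_{i : P_i = 0} M_{i,j} L_i and constant ∑_{i : P_i = 0} M_{i,j} d_i + c_j. -/
open Finset RealInnerProductSpace

/-! The neurons feeding into `j` are affine in the input, so the pre-activation of `j` is the
affine function `Y ↦ ⟪v, Y⟫ + b` of the input with `v = ∑ M i j • L i`. Moving the input from `X`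
to `X'` changes it by `⟪v, X' - X⟫`, which Cauchy–Schwarz bounds by `r ‖v‖`; the margin therefore
keeps `a'` positive, and the ReLU acts as the identity on it. -/

theorem EuclideanSpace.real_inner_eq_sum_mul {ι : Type*} [Fintype ι] (v Y : EuclideanSpace ℝ ι) :
    ⟪v, Y⟫ = ∑ l, v l * Y l := by
  simp [EuclideanSpace.inner_eq_star_dotProduct, dotProduct, mul_comm]

section

variable {E : Type*} [NormedAddCommGroup E] [InnerProductSpace ℝ E]

theorem sum_mul_inner_add_eq {ι : Type*} (s : Finset ι) (w d y : ι → ℝ) (L : ι → E) (Y : E)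
    (hy : ∀ i ∈ s, y i = ⟪L i, Y⟫ + d i) :
    ∑ i ∈ s, w i * y i = ⟪∑ i ∈ s, w i • L i, Y⟫ + ∑ i ∈ s, w i * d i := by
  rw [sum_inner, ← sum_add_distrib]
  refine sum_congr rfl fun i hi => ?_
  rw [hy i hi, real_inner_smul_left, mul_add]

theorem inner_add_pos_of_mul_norm_lt {v Y Y' : E} {b r : ℝ} (hY : ‖Y' - Y‖ ≤ r)
    (hmargin : r * ‖v‖ < ⟪v, Y⟫ + b) : 0 < ⟪v, Y'⟫ + b := by
  have hshift : ⟪v, Y'⟫ = ⟪v, Y⟫ + ⟪v, Y' - Y⟫ := by rw [inner_sub_right]; ring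
  have hcs : -(r * ‖v‖) ≤ ⟪v, Y' - Y⟫ := calc
    -(r * ‖v‖) ≤ -(‖v‖ * ‖Y' - Y‖) := by nlinarith [norm_nonneg v]
    _ ≤ ⟪v, Y' - Y⟫ := neg_le_of_abs_le (abs_real_inner_le_norm v (Y' - Y))
  linarith

end

theorem active_neuron_stays_affine_general
    (m : ℕ) (r : ℝ)
    (X X' : EuclideanSpace ℝ (Fin m)) (hXX' : ‖X' - X‖ ≤ r)
    (x x' : Fin m → ℝ) (M : Matrix (Fin m) (Fin m) ℝ) (c : Fin m → ℝ) (j : Fin m)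
    (P : Fin m → ℕ)
    (L : Fin m → EuclideanSpace ℝ (Fin m)) (d : Fin m → ℝ)
    (a a' : ℝ)
    (ha : a = (∑ i, M i j * x i) + c j)
    (ha' : a' = (∑ i, M i j * x' i) + c j)
    (haff : ∀ i, P i = 0 →
      x i = (∑ l, L i l * X l) + d i ∧ x' i = (∑ l, L i l * X' l) + d i)
    (hM0 : ∀ i, M i j ≠ 0 → P i = 0)
    (hmargin : a > r * ‖∑ i ∈ Finset.univ.filter (fun i => P i = 0), M i j • L i‖) :
    a' > 0 ∧ max a' 0 = a' ∧
      a' = (∑ l, (∑ i ∈ Finset.univ.filter (fun i => P i = 0), M i j * L i l) * X' l) +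
        ((∑ i ∈ Finset.univ.filter (fun i => P i = 0), M i j * d i) + c j) := by
  set S := univ.filter fun i => P i = 0
  have hpre (y : Fin m → ℝ) (Y : EuclideanSpace ℝ (Fin m))
      (hy : ∀ i ∈ S, y i = ∑ l, L i l * Y l + d i) :
      ∑ i, M i j * y i + c j = ⟪∑ i ∈ S, M i j • L i, Y⟫ + (∑ i ∈ S, M i j * d i + c j) := by
    have hsupp : ∑ i ∈ S, M i j * y i = ∑ i, M i j * y i :=
      sum_filter_of_ne fun i _ h => hM0 i (left_ne_zero_of_mul h)
    simp only [← EuclideanSpace.real_inner_eq_sum_mul] at hy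
    rw [← hsupp, sum_mul_inner_add_eq S _ _ _ L Y hy, add_assoc]
  have hS (i) (hi : i ∈ S) : P i = 0 := (mem_filter.mp hi).2
  rw [hpre x X fun i hi => (haff i (hS i hi)).1] at ha
  rw [hpre x' X' fun i hi => (haff i (hS i hi)).2] at ha'
  have hpos : 0 < a' := ha' ▸ inner_add_pos_of_mul_norm_lt hXX' (ha ▸ hmargin)
  refine ⟨hpos, max_eq_left hpos.le, ?_⟩
  rw [ha', EuclideanSpace.real_inner_eq_sum_mul]
  simp

/-- The second case in the proof of Proposition 4.1: when every neuron feeding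
into `j` with a nonzero weight is affine on the ball and the activation margin
exceeds the perturbation bound, the next-layer neuron is itself affine on the
whole ball, with explicitly composed coefficients. -/
theorem active_neuron_stays_affine
    (m : ℕ) (hm : 1 ≤ m) (r : ℝ) (hr : 0 < r)
    (X X' : EuclideanSpace ℝ (Fin m)) (hXX' : ‖X' - X‖ ≤ r)
    (x x' : Fin m → ℝ) (M : Matrix (Fin m) (Fin m) ℝ) (c : Fin m → ℝ) (j : Fin m)
    (P : Fin m → ℕ) (hP : ∀ i, P i = 0 ∨ P i = 1)
    (L : Fin m → EuclideanSpace ℝ (Fin m)) (d : Fin m → ℝ)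
    (a a' : ℝ)
    (ha : a = (∑ i, M i j * x i) + c j)
    (ha' : a' = (∑ i, M i j * x' i) + c j)
    (haff : ∀ i, P i = 0 →
      x i = (∑ l, L i l * X l) + d i ∧ x' i = (∑ l, L i l * X' l) + d i)
    (hM0 : ∀ i, M i j ≠ 0 → P i = 0)
    (hmargin : a > r * ‖∑ i ∈ Finset.univ.filter (fun i => P i = 0), M i j • L i‖) :
    a' > 0 ∧ max a' 0 = a' ∧
      a' = (∑ l, (∑ i ∈ Finset.univ.filter (fun i => P i = 0), M i j * L i l) * X' l) +
        ((∑ i ∈ Finset.univ.filter (fun i => P i = 0), M i j * d i) + c j) :=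
  active_neuron_stays_affine_general m r X X' hXX' x x' M c j P L d a a' ha ha' haff hM0 hmargin
end

section
/- Let m ≥ 1, r > 0, and let X, X' ∈ ℝ^m with ‖X' − X‖₂ ≤ r. Let x, x' ∈ ℝ^m, M ∈ ℝ^{m×m}, c ∈ ℝ^m, and fix an index j ∈ {1,…,m}. Set a = ∑_{i=1}^m M_{i,j} x_i + c_j and a' = ∑_{i=1}^m M_{i,j} x'_i + c_j. Suppose there are flags P : {1,…,m} → {0,1}, a matrix L ∈ ℝ^{m×m} with rows L_i, a vector d ∈ ℝ^m, and nonnegative bounds U ∈ ℝ^m such that: (i) for every i with P_i = 0, x_i = ∑_{l=1}^m L_{i,l} X_l + d_i and x'_i = ∑_{l=1}^m L_{i,l} X'_l + d_i; (ii) for every i, |x'_i − x_i| ≤ U_i. If a > ∑_{i : P_i = 1} |M_{i,j}| · U_i + r · ‖∑_{i : P_i = 0} M_{i,j} · L_i‖₂, then a' > 0; in particular a · a' > 0. -/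
/-!
The change `a' - a = ∑ᵢ M i j * (x' i - x i)` splits along the flags. On the coordinates with
`P i = 0` both inputs are the same affine function of the network input, so that part equals
`⟪∑ M i j • L i, X' - X⟫` and Cauchy–Schwarz bounds it by `r * ‖∑ M i j • L i‖`; the remaining
coordinates are bounded termwise by `|M i j| * U i`. Hence `|a' - a|` is at most the margin,
which `a` exceeds, so `a` and `a'` are both positive.
-/

open Finset

section PerturbationBound

variable {ι κ : Type*} [Fintype κ]

theorem inner_sub_eq_sum_mul_sub (w X X' : EuclideanSpace ℝ κ) :
    inner ℝ w (X' - X) = ∑ l, w l * X' l - ∑ l, w l * X l := by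
  simp [PiLp.inner_apply, ← sum_sub_distrib, mul_sub, mul_comm]

theorem abs_sum_mul_sub_le_of_abs_le (s : Finset ι) (w U x x' : ι → ℝ)
    (hU : ∀ i ∈ s, |x' i - x i| ≤ U i) :
    |∑ i ∈ s, w i * (x' i - x i)| ≤ ∑ i ∈ s, |w i| * U i :=
  (abs_sum_le_sum_abs _ _).trans <| sum_le_sum fun i hi => by
    rw [abs_mul]
    exact mul_le_mul_of_nonneg_left (hU i hi) (abs_nonneg _)

theorem abs_sum_mul_sub_le_of_eq_inner (s : Finset ι) (w x x' : ι → ℝ)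
    (L : ι → EuclideanSpace ℝ κ) {X X' : EuclideanSpace ℝ κ} {r : ℝ} (hXX' : ‖X' - X‖ ≤ r)
    (hL : ∀ i ∈ s, x' i - x i = inner ℝ (L i) (X' - X)) :
    |∑ i ∈ s, w i * (x' i - x i)| ≤ r * ‖∑ i ∈ s, w i • L i‖ := by
  have hsum : ∑ i ∈ s, w i * (x' i - x i) = inner ℝ (∑ i ∈ s, w i • L i) (X' - X) := by
    rw [sum_inner]
    exact sum_congr rfl fun i hi => by rw [real_inner_smul_left, hL i hi]
  calc |∑ i ∈ s, w i * (x' i - x i)| ≤ ‖∑ i ∈ s, w i • L i‖ * ‖X' - X‖ :=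
        hsum ▸ abs_real_inner_le_norm _ _
    _ ≤ r * ‖∑ i ∈ s, w i • L i‖ := by
        rw [mul_comm]
        exact mul_le_mul_of_nonneg_right hXX' (norm_nonneg _)

theorem abs_sum_mul_sub_le_of_flags [Fintype ι] (P : ι → ℕ) (hP : ∀ i, P i = 0 ∨ P i = 1)
    (w U x x' : ι → ℝ) (L : ι → EuclideanSpace ℝ κ) {X X' : EuclideanSpace ℝ κ} {r : ℝ}
    (hXX' : ‖X' - X‖ ≤ r) (hL : ∀ i, P i = 0 → x' i - x i = inner ℝ (L i) (X' - X))
    (hU : ∀ i, |x' i - x i| ≤ U i) :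
    |∑ i, w i * (x' i - x i)| ≤
      (∑ i ∈ univ.filter (fun i => P i = 1), |w i| * U i) +
        r * ‖∑ i ∈ univ.filter (fun i => P i = 0), w i • L i‖ := by
  have hflags : univ.filter (fun i => ¬P i = 0) = univ.filter (fun i => P i = 1) :=
    filter_congr fun i _ => by rcases hP i with h | h <;> simp [h]
  rw [← sum_filter_add_sum_filter_not univ (fun i => P i = 0), hflags, add_comm]
  refine (abs_add_le _ _).trans (add_le_add ?_ ?_)
  · exact abs_sum_mul_sub_le_of_abs_le _ w U x x' fun i _ => hU i
  · exact abs_sum_mul_sub_le_of_eq_inner _ w x x' L hXX' fun i hi => hL i (mem_filter.mp hi).2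

end PerturbationBound

theorem active_neuron_sign_preserved_general
    (m : ℕ) (r : ℝ)
    (X X' : EuclideanSpace ℝ (Fin m)) (hXX' : ‖X' - X‖ ≤ r)
    (x x' : Fin m → ℝ) (M : Matrix (Fin m) (Fin m) ℝ) (c : Fin m → ℝ) (j : Fin m)
    (P : Fin m → ℕ) (hP : ∀ i, P i = 0 ∨ P i = 1)
    (L : Fin m → EuclideanSpace ℝ (Fin m)) (d : Fin m → ℝ)
    (U : Fin m → ℝ)
    (a a' : ℝ)
    (ha : a = (∑ i, M i j * x i) + c j)
    (ha' : a' = (∑ i, M i j * x' i) + c j)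
    (haff : ∀ i, P i = 0 →
      x i = (∑ l, L i l * X l) + d i ∧ x' i = (∑ l, L i l * X' l) + d i)
    (hUb : ∀ i, |x' i - x i| ≤ U i)
    (hmargin : a > (∑ i ∈ Finset.univ.filter (fun i => P i = 1), |M i j| * U i) +
      r * ‖∑ i ∈ Finset.univ.filter (fun i => P i = 0), M i j • L i‖) :
    a' > 0 ∧ a * a' > 0 := by
  have hchange : a' - a = ∑ i, M i j * (x' i - x i) := by
    simp only [ha, ha', mul_sub, sum_sub_distrib]
    ring
  have hL (i : Fin m) (hi : P i = 0) : x' i - x i = inner ℝ (L i) (X' - X) := by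
    rw [inner_sub_eq_sum_mul_sub, (haff i hi).1, (haff i hi).2]
    ring
  have hbound := abs_sum_mul_sub_le_of_flags P hP (fun i => M i j) U x x' L hXX' hL hUb
  rw [← hchange] at hbound
  have ha'_pos : a' > 0 := by linarith [neg_abs_le (a' - a)]
  have ha_pos : a > 0 := by linarith [abs_nonneg (a' - a)]
  exact ⟨ha'_pos, mul_pos ha_pos ha'_pos⟩

/-- The positive-sign-preservation case in the proof of Proposition 4.1:
if the activation margin exceeds the perturbation bound, the perturbed
pre-activation is also strictly positive. -/
theorem active_neuron_sign_preserved
    (m : ℕ) (hm : 1 ≤ m) (r : ℝ) (hr : 0 < r)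
    (X X' : EuclideanSpace ℝ (Fin m)) (hXX' : ‖X' - X‖ ≤ r)
    (x x' : Fin m → ℝ) (M : Matrix (Fin m) (Fin m) ℝ) (c : Fin m → ℝ) (j : Fin m)
    (P : Fin m → ℕ) (hP : ∀ i, P i = 0 ∨ P i = 1)
    (L : Fin m → EuclideanSpace ℝ (Fin m)) (d : Fin m → ℝ)
    (U : Fin m → ℝ) (hU : ∀ i, 0 ≤ U i)
    (a a' : ℝ)
    (ha : a = (∑ i, M i j * x i) + c j)
    (ha' : a' = (∑ i, M i j * x' i) + c j)
    (haff : ∀ i, P i = 0 →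
      x i = (∑ l, L i l * X l) + d i ∧ x' i = (∑ l, L i l * X' l) + d i)
    (hUb : ∀ i, |x' i - x i| ≤ U i)
    (hmargin : a > (∑ i ∈ Finset.univ.filter (fun i => P i = 1), |M i j| * U i) +
      r * ‖∑ i ∈ Finset.univ.filter (fun i => P i = 0), M i j • L i‖) :
    a' > 0 ∧ a * a' > 0 :=
  active_neuron_sign_preserved_general m r X X' hXX' x x' M c j P hP L d U a a' ha ha' haff hUb
    hmargin
end

section
/- Let m ≥ 1, r > 0, and let X, X' ∈ ℝ^m with ‖X' − X‖₂ ≤ r. Let x, x' ∈ ℝ^m, M ∈ ℝ^{m×m}, c ∈ ℝ^m, and fix an index j ∈ {1,…,m}. Set a = ∑_{i=1}^m M_{i,j} x_i + c_j and a' = ∑_{i=1}^m M_{i,j} x'_i + c_j. Suppose there are flags P : {1,…,m} → {0,1}, a matrix L ∈ ℝ^{m×m} with rows L_i, a vector d ∈ ℝ^m, and nonnegative bounds U ∈ ℝ^m such that: (i) for every i with P_i = 0, x_i = ∑_{l=1}^m L_{i,l} X_l + d_i and x'_i = ∑_{l=1}^m L_{i,l} X'_l + d_i; (ii) for every i, |x'_i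 − x_i| ≤ U_i. If |a| > ∑_{i : P_i = 1} |M_{i,j}| · U_i + r · ‖∑_{i : P_i = 0} M_{i,j} · L_i‖₂, then a · a' > 0, i.e., the pre-activations of neuron j at the next layer for the two inputs have the same strict sign. -/
/-!
The change `a' - a = ∑ᵢ M i j * (x' i - x i)` splits along the flags. On unstable neurons
(`P i = 1`) each term is bounded by `|M i j| * U i`. On stable neurons (`P i = 0`) both values
come from the same affine map, so their contribution is the single inner product
`⟪∑ M i j • L i, X' - X⟫`, which Cauchy–Schwarz bounds by `r * ‖∑ M i j • L i‖`. Hence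
`|a' - a| < |a|`, and `a'` cannot have crossed zero.
-/

open Finset RealInnerProductSpace

theorem mul_pos_of_abs_sub_lt_abs {a b : ℝ} (h : |b - a| < |a|) : 0 < a * b := by
  rcases le_or_gt 0 a with ha | ha
  · rw [abs_of_nonneg ha, abs_lt] at h
    exact mul_pos (by linarith [abs_nonneg (b - a)]) (by linarith)
  · rw [abs_of_neg ha, abs_lt] at h
    exact mul_pos_of_neg_of_neg ha (by linarith)

theorem EuclideanSpace.sum_mul_sub_sum_mul {ι : Type*} [Fintype ι]
    (L X X' : EuclideanSpace ℝ ι) :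
    ∑ l, L l * X' l - ∑ l, L l * X l = ⟪L, X' - X⟫ := by
  simp only [PiLp.inner_apply, PiLp.sub_apply, RCLike.inner_apply, conj_trivial,
    ← Finset.sum_sub_distrib]
  exact Finset.sum_congr rfl fun l _ => by ring

section Split

variable {ι E : Type*} [NormedAddCommGroup E] [InnerProductSpace ℝ E]

theorem sum_mul_eq_inner_sum_smul (s : Finset ι) (w δ : ι → ℝ) (L : ι → E) (u : E)
    (hL : ∀ i ∈ s, δ i = ⟪L i, u⟫) :
    ∑ i ∈ s, w i * δ i = ⟪∑ i ∈ s, w i • L i, u⟫ := by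
  rw [sum_inner]
  exact Finset.sum_congr rfl fun i hi => by rw [real_inner_smul_left, hL i hi]

theorem abs_sum_mul_le_of_split [Fintype ι] (p : ι → Prop) [DecidablePred p] (w δ U : ι → ℝ)
    (L : ι → E) (u : E) (hL : ∀ i, p i → δ i = ⟪L i, u⟫) (hU : ∀ i, ¬ p i → |δ i| ≤ U i) :
    |∑ i, w i * δ i| ≤
      ∑ i ∈ univ.filter (fun i => ¬ p i), |w i| * U i + ‖u‖ * ‖∑ i ∈ univ.filter p, w i • L i‖ := by
  rw [← sum_filter_add_sum_filter_not univ p,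
    sum_mul_eq_inner_sum_smul _ w δ L u fun i hi => hL i (mem_filter.1 hi).2, add_comm]
  refine (abs_add_le _ _).trans (add_le_add ?_ ?_)
  · refine (abs_sum_le_sum_abs _ _).trans (sum_le_sum fun i hi => ?_)
    rw [abs_mul]
    exact mul_le_mul_of_nonneg_left (hU i (mem_filter.1 hi).2) (abs_nonneg _)
  · rw [mul_comm]
    exact abs_real_inner_le_norm _ _

end Split

theorem sign_preserved_of_margin_general
    (m : ℕ) (r : ℝ)
    (X X' : EuclideanSpace ℝ (Fin m)) (hXX' : ‖X' - X‖ ≤ r)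
    (x x' : Fin m → ℝ) (M : Matrix (Fin m) (Fin m) ℝ) (c : Fin m → ℝ) (j : Fin m)
    (P : Fin m → ℕ) (hP : ∀ i, P i = 0 ∨ P i = 1)
    (L : Fin m → EuclideanSpace ℝ (Fin m)) (d : Fin m → ℝ)
    (U : Fin m → ℝ)
    (a a' : ℝ)
    (ha : a = (∑ i, M i j * x i) + c j)
    (ha' : a' = (∑ i, M i j * x' i) + c j)
    (haff : ∀ i, P i = 0 →
      x i = (∑ l, L i l * X l) + d i ∧ x' i = (∑ l, L i l * X' l) + d i)
    (hUb : ∀ i, |x' i - x i| ≤ U i)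
    (hmargin : |a| > (∑ i ∈ Finset.univ.filter (fun i => P i = 1), |M i j| * U i) +
      r * ‖∑ i ∈ Finset.univ.filter (fun i => P i = 0), M i j • L i‖) :
    a * a' > 0 := by
  have hdiff : a' - a = ∑ i, M i j * (x' i - x i) := by
    simp only [ha, ha', mul_sub, sum_sub_distrib]
    ring
  have hstable : ∀ i, P i = 0 → x' i - x i = ⟪L i, X' - X⟫ := fun i hi => by
    rw [(haff i hi).1, (haff i hi).2, add_sub_add_right_eq_sub,
      EuclideanSpace.sum_mul_sub_sum_mul]
  have hunstable : univ.filter (fun i => P i = 1) = univ.filter (fun i => ¬ P i = 0) :=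
    filter_congr fun i _ => by rcases hP i with h | h <;> simp [h]
  have hbound := abs_sum_mul_le_of_split (fun i => P i = 0) (fun i => M i j)
    (fun i => x' i - x i) U L (X' - X) hstable (fun i _ => hUb i)
  rw [← hdiff, ← hunstable] at hbound
  refine mul_pos_of_abs_sub_lt_abs (hbound.trans_lt (lt_of_le_of_lt ?_ hmargin))
  gcongr

/-- The combined sign-preservation case in the proof of Proposition 4.1:
whenever the Algorithm 1 bound is smaller than the activation margin `|a|`,
the pre-activations for the two inputs have the same strict sign. -/
theorem sign_preserved_of_margin
    (m : ℕ) (hm : 1 ≤ m) (r : ℝ) (hr : 0 < r)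
    (X X' : EuclideanSpace ℝ (Fin m)) (hXX' : ‖X' - X‖ ≤ r)
    (x x' : Fin m → ℝ) (M : Matrix (Fin m) (Fin m) ℝ) (c : Fin m → ℝ) (j : Fin m)
    (P : Fin m → ℕ) (hP : ∀ i, P i = 0 ∨ P i = 1)
    (L : Fin m → EuclideanSpace ℝ (Fin m)) (d : Fin m → ℝ)
    (U : Fin m → ℝ) (hU : ∀ i, 0 ≤ U i)
    (a a' : ℝ)
    (ha : a = (∑ i, M i j * x i) + c j)
    (ha' : a' = (∑ i, M i j * x' i) + c j)
    (haff : ∀ i, P i = 0 →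
      x i = (∑ l, L i l * X l) + d i ∧ x' i = (∑ l, L i l * X' l) + d i)
    (hUb : ∀ i, |x' i - x i| ≤ U i)
    (hmargin : |a| > (∑ i ∈ Finset.univ.filter (fun i => P i = 1), |M i j| * U i) +
      r * ‖∑ i ∈ Finset.univ.filter (fun i => P i = 0), M i j • L i‖) :
    a * a' > 0 :=
  sign_preserved_of_margin_general m r X X' hXX' x x' M c j P hP L d U a a' ha ha' haff hUb hmargin
end

section
/- Let m ≥ 1, r > 0, and let X, X' ∈ ℝ^m with ‖X' − X‖₂ ≤ r. Let x, x' ∈ ℝ^m, M ∈ ℝ^{m×m}, c ∈ ℝ^m, and fix an index j ∈ {1,…,m}. Set a = ∑_{i=1}^m M_{i,j} x_i + c_j and a' = ∑_{i=1}^m M_{i,j} x'_i + c_j. Suppose there are flags P : {1,…,m} → {0,1}, a matrix L ∈ ℝ^{m×m} with rows L_i, a vector d ∈ ℝ^m, and nonnegative bounds U ∈ ℝ^m such that: (i) for every i with P_i = 0, x_i = ∑_{l=1}^m L_{i,l} X_l + d_i and x'_i = ∑_{l=1}^m L_{i,l} X'_l + d_i; (ii) for every i, |x'_i − x_i| ≤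 U_i. Then, without any sign assumption on a, |max(a', 0) − max(a, 0)| ≤ ∑_{i : P_i = 1} |M_{i,j}| · U_i + r · ‖∑_{i : P_i = 0} M_{i,j} · L_i‖₂. -/
open Finset

/-!
ReLU is 1-Lipschitz, so it suffices to bound `|a' - a| = |∑ᵢ M i j (x' i - x i)|`. Split the
neurons by their flag: on flagged neurons use the given bounds `U`; on the others `x` and `x'` are
the same affine function of `X` and `X'`, so their contribution is the inner product of
`∑ M i j • L i` with `X' - X`, which Cauchy–Schwarz bounds by `r ‖∑ M i j • L i‖`.
-/

theorem EuclideanSpace.sum_mul_apply_eq_inner {n : Type*} [Fintype n]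
    (v X : EuclideanSpace ℝ n) : ∑ l, v l * X l = inner ℝ v X := by
  simp [PiLp.inner_apply, mul_comm]

theorem abs_sum_mul_sub_le_sum_abs_mul {ι : Type*} (s : Finset ι) (w x x' U : ι → ℝ)
    (hU : ∀ i ∈ s, |x' i - x i| ≤ U i) :
    |∑ i ∈ s, w i * (x' i - x i)| ≤ ∑ i ∈ s, |w i| * U i :=
  (abs_sum_le_sum_abs _ _).trans <| sum_le_sum fun i hi => by
    rw [abs_mul]
    exact mul_le_mul_of_nonneg_left (hU i hi) (abs_nonneg _)

theorem sum_mul_sub_eq_inner_of_affine {ι n : Type*} [Fintype n] (s : Finset ι)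
    (w x x' d : ι → ℝ) (L : ι → EuclideanSpace ℝ n) (X X' : EuclideanSpace ℝ n)
    (haff : ∀ i ∈ s, x i = (∑ l, L i l * X l) + d i ∧ x' i = (∑ l, L i l * X' l) + d i) :
    ∑ i ∈ s, w i * (x' i - x i) = inner ℝ (∑ i ∈ s, w i • L i) (X' - X) := by
  rw [sum_inner]
  refine sum_congr rfl fun i hi => ?_
  obtain ⟨hx, hx'⟩ := haff i hi
  rw [real_inner_smul_left, inner_sub_right, hx, hx',
    EuclideanSpace.sum_mul_apply_eq_inner, EuclideanSpace.sum_mul_apply_eq_inner]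
  ring

theorem abs_sum_mul_sub_le_of_affine {ι n : Type*} [Fintype n] (s : Finset ι)
    (w x x' d : ι → ℝ) (L : ι → EuclideanSpace ℝ n) (X X' : EuclideanSpace ℝ n)
    {r : ℝ} (hXX' : ‖X' - X‖ ≤ r)
    (haff : ∀ i ∈ s, x i = (∑ l, L i l * X l) + d i ∧ x' i = (∑ l, L i l * X' l) + d i) :
    |∑ i ∈ s, w i * (x' i - x i)| ≤ r * ‖∑ i ∈ s, w i • L i‖ := by
  rw [sum_mul_sub_eq_inner_of_affine s w x x' d L X X' haff, mul_comm]
  exact (abs_real_inner_le_norm _ _).trans (mul_le_mul_of_nonneg_left hXX' (norm_nonneg _))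

theorem postactivation_bound_unconditional_general
    (m : ℕ) (r : ℝ)
    (X X' : EuclideanSpace ℝ (Fin m)) (hXX' : ‖X' - X‖ ≤ r)
    (x x' : Fin m → ℝ) (M : Matrix (Fin m) (Fin m) ℝ) (c : Fin m → ℝ) (j : Fin m)
    (P : Fin m → ℕ) (hP : ∀ i, P i = 0 ∨ P i = 1)
    (L : Fin m → EuclideanSpace ℝ (Fin m)) (d : Fin m → ℝ)
    (U : Fin m → ℝ)
    (a a' : ℝ)
    (ha : a = (∑ i, M i j * x i) + c j)
    (ha' : a' = (∑ i, M i j * x' i) + c j)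
    (haff : ∀ i, P i = 0 →
      x i = (∑ l, L i l * X l) + d i ∧ x' i = (∑ l, L i l * X' l) + d i)
    (hUb : ∀ i, |x' i - x i| ≤ U i) :
    |max a' 0 - max a 0| ≤
      (∑ i ∈ Finset.univ.filter (fun i => P i = 1), |M i j| * U i) +
        r * ‖∑ i ∈ Finset.univ.filter (fun i => P i = 0), M i j • L i‖ := by
  have hflag : univ.filter (fun i => ¬P i = 0) = univ.filter (fun i => P i = 1) :=
    filter_congr fun i _ => by rcases hP i with h | h <;> simp [h]
  have hsplit : a' - a = (∑ i ∈ univ.filter (fun i => P i = 1), M i j * (x' i - x i)) +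
      ∑ i ∈ univ.filter (fun i => P i = 0), M i j * (x' i - x i) := by
    rw [← hflag, add_comm, sum_filter_add_sum_filter_not, ha, ha', add_sub_add_right_eq_sub,
      ← sum_sub_distrib]
    simp only [mul_sub]
  calc |max a' 0 - max a 0| ≤ |a' - a| := abs_max_sub_max_le_abs _ _ _
    _ ≤ _ := by
      rw [hsplit]
      refine (abs_add_le _ _).trans (add_le_add ?_ ?_)
      · exact abs_sum_mul_sub_le_sum_abs_mul _ _ _ _ _ fun i _ => hUb i
      · exact abs_sum_mul_sub_le_of_affine _ _ _ _ _ _ _ _ hXX' fun i hi =>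
          haff i (mem_filter.1 hi).2

/-- The unconditional post-activation stability bound propagated by Algorithm
1: combining Lemma 4.2 with the 1-Lipschitz property of ReLU gives the
condition `U(k+1,r)` in all cases. -/
theorem postactivation_bound_unconditional
    (m : ℕ) (hm : 1 ≤ m) (r : ℝ) (hr : 0 < r)
    (X X' : EuclideanSpace ℝ (Fin m)) (hXX' : ‖X' - X‖ ≤ r)
    (x x' : Fin m → ℝ) (M : Matrix (Fin m) (Fin m) ℝ) (c : Fin m → ℝ) (j : Fin m)
    (P : Fin m → ℕ) (hP : ∀ i, P i = 0 ∨ P i = 1)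
    (L : Fin m → EuclideanSpace ℝ (Fin m)) (d : Fin m → ℝ)
    (U : Fin m → ℝ) (hU : ∀ i, 0 ≤ U i)
    (a a' : ℝ)
    (ha : a = (∑ i, M i j * x i) + c j)
    (ha' : a' = (∑ i, M i j * x' i) + c j)
    (haff : ∀ i, P i = 0 →
      x i = (∑ l, L i l * X l) + d i ∧ x' i = (∑ l, L i l * X' l) + d i)
    (hUb : ∀ i, |x' i - x i| ≤ U i) :
    |max a' 0 - max a 0| ≤
      (∑ i ∈ Finset.univ.filter (fun i => P i = 1), |M i j| * U i) +
        r * ‖∑ i ∈ Finset.univ.filter (fun i => P i = 0), M i j • L i‖ :=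
  postactivation_bound_unconditional_general m r X X' hXX' x x' M c j P hP L d U a a' ha ha' haff
    hUb
end
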